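/- Let ψ : (1,∞) → ℝ be a continuous nonnegative function and ε > 0, C > 0 constants. If ψ(r) ≤ C for all r > 1, and ψ(r) ≤ C ∫_r^∞ ψ(s)/s^{1+ε} ds for all r > 1, then ψ(r) = 0 for all r > 1. -/
import Mathlib


open MeasureTheory Set Filter Topology

theorem stmt_0 (ψ : ℝ → ℝ) (ε C : ℝ) (hε : 0 < ε) (hC : 0 < C)
    (hcont : ContinuousOn ψ (Ioi 1))
    (hnonneg : ∀ r ∈ Ioi (1:ℝ), 0 ≤ ψ r)
    (hbdd : ∀ r ∈ Ioi (1:ℝ), ψ r ≤ C)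
    (hint : ∀ r ∈ Ioi (1:ℝ), ψ r ≤ C * ∫ s in Ioi r, ψ s / s ^ (1 + ε)) :
    ∀ r ∈ Ioi (1:ℝ), ψ r = 0 := by
  have key : ∀ n : ℕ, ∀ r ∈ Ioi (1:ℝ),
      ψ r ≤ C ^ (n + 1) / (n.factorial * ε ^ n) * r ^ (-((n : ℝ) * ε)) := by
    intro n
    induction n with
    | zero =>
      intro r hr
      simpa using hbdd r hr
    | succ n ih =>
      intro r hr
      have hr1 : (1:ℝ) < r := hr
      have hrpos : (0:ℝ) < r := lt_trans one_pos hr1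
      set M : ℝ := C ^ (n + 1) / (n.factorial * ε ^ n) with hMdef
      have hMpos : 0 < M := by
        apply div_pos (pow_pos hC _)
        positivity
      set p : ℝ := -(1 + ((n : ℝ) + 1) * ε) with hpdef
      have hp : p < -1 := by
        have : 0 < ((n : ℝ) + 1) * ε := by positivity
        simp only [hpdef]; linarith
      have hg_int : IntegrableOn (fun s : ℝ => M * s ^ p) (Ioi r) := by
        exact (integrableOn_Ioi_rpow_of_lt hp hrpos).const_mul M
      -- pointwise bound on Ioi r
      have hpt : ∀ s ∈ Ioi r, ψ s / s ^ (1 + ε) ≤ M * s ^ p := by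
        intro s hs
        have hs1 : (1:ℝ) < s := lt_trans hr1 hs
        have hspos : (0:ℝ) < s := lt_trans one_pos hs1
        have hden : (0:ℝ) < s ^ (1 + ε) := Real.rpow_pos_of_pos hspos _
        have hnum : ψ s ≤ M * s ^ (-((n : ℝ) * ε)) := ih s hs1
        have h1 : ψ s / s ^ (1 + ε) ≤ M * s ^ (-((n : ℝ) * ε)) / s ^ (1 + ε) := by
          gcongr
        calc ψ s / s ^ (1 + ε) ≤ M * s ^ (-((n : ℝ) * ε)) / s ^ (1 + ε) := h1
          _ = M * s ^ p := by
              rw [mul_div_assoc, ← Real.rpow_sub hspos]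
              congr 1
              simp only [hpdef]
              push_cast
              ring
      -- integrability of the integrand
      have hf_meas : AEStronglyMeasurable (fun s => ψ s / s ^ (1 + ε))
          (volume.restrict (Ioi r)) := by
        have hcψ : ContinuousOn ψ (Ioi r) := hcont.mono (Ioi_subset_Ioi hr1.le)
        have hcd : ContinuousOn (fun s : ℝ => s ^ (1 + ε)) (Ioi r) := by
          intro s hs
          have hspos : (0:ℝ) < s := lt_trans one_pos (lt_trans hr1 hs)
          exact (Real.continuousAt_rpow_const s (1 + ε) (Or.inl hspos.ne')).continuousWithinAt
        have : ContinuousOn (fun s => ψ s / s ^ (1 + ε)) (Ioi r) := by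
          apply hcψ.div hcd
          intro s hs
          have hspos : (0:ℝ) < s := lt_trans one_pos (lt_trans hr1 hs)
          exact (Real.rpow_pos_of_pos hspos _).ne'
        exact this.aestronglyMeasurable measurableSet_Ioi
      have hf_int : IntegrableOn (fun s => ψ s / s ^ (1 + ε)) (Ioi r) := by
        apply MeasureTheory.Integrable.mono hg_int hf_meas
        filter_upwards [ae_restrict_mem measurableSet_Ioi] with s hs
        have hs1 : (1:ℝ) < s := lt_trans hr1 hs
        have hspos : (0:ℝ) < s := lt_trans one_pos hs1
        have hnn : 0 ≤ ψ s / s ^ (1 + ε) :=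
          div_nonneg (hnonneg s hs1) (Real.rpow_pos_of_pos hspos _).le
        rw [Real.norm_of_nonneg hnn, Real.norm_of_nonneg (by positivity)]
        exact hpt s hs
      have hmono : (∫ s in Ioi r, ψ s / s ^ (1 + ε)) ≤ ∫ s in Ioi r, M * s ^ p :=
        setIntegral_mono_on hf_int hg_int measurableSet_Ioi hpt
      have hcomp : (∫ s in Ioi r, M * s ^ p) = M * (r ^ (p + 1) / (-(p + 1))) := by
        rw [integral_const_mul, integral_Ioi_rpow_of_lt hp hrpos]
        rw [div_neg, neg_div]
      have hstep := hint r hr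
      have : ψ r ≤ C * (M * (r ^ (p + 1) / (-(p + 1)))) := by
        calc ψ r ≤ C * ∫ s in Ioi r, ψ s / s ^ (1 + ε) := hstep
          _ ≤ C * ∫ s in Ioi r, M * s ^ p := by
              exact mul_le_mul_of_nonneg_left hmono hC.le
          _ = C * (M * (r ^ (p + 1) / (-(p + 1)))) := by rw [hcomp]
      refine this.trans (le_of_eq ?_)
      have hp1 : p + 1 = -(((n : ℝ) + 1) * ε) := by simp only [hpdef]; ring
      rw [hp1]
      have hfac : ((n + 1).factorial : ℝ) = ((n : ℝ) + 1) * (n.factorial : ℝ) := by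
        push_cast [Nat.factorial_succ]; ring
      have hne1 : (n.factorial : ℝ) ≠ 0 := Nat.cast_ne_zero.mpr n.factorial_pos.ne'
      have hne2 : ((n : ℝ) + 1) ≠ 0 := by positivity
      simp only [hMdef]
      push_cast [Nat.factorial_succ]
      field_simp
      ring
  -- conclude
  intro r hr
  have hr1 : (1:ℝ) < r := hr
  have hbound : ∀ n : ℕ, ψ r ≤ C * ((C / ε) ^ n / n.factorial) := by
    intro n
    have h1 := key n r hr
    have h2 : r ^ (-((n : ℝ) * ε)) ≤ 1 :=
      Real.rpow_le_one_of_one_le_of_nonpos hr1.le (neg_nonpos.mpr (by positivity))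
    have hMnn : (0:ℝ) ≤ C ^ (n + 1) / (n.factorial * ε ^ n) := by positivity
    calc ψ r ≤ C ^ (n + 1) / (n.factorial * ε ^ n) * r ^ (-((n : ℝ) * ε)) := h1
      _ ≤ C ^ (n + 1) / (n.factorial * ε ^ n) * 1 := mul_le_mul_of_nonneg_left h2 hMnn
      _ = C * ((C / ε) ^ n / n.factorial) := by
          rw [div_pow]
          have hne1 : ((n.factorial:ℝ)) ≠ 0 := Nat.cast_ne_zero.mpr n.factorial_pos.ne'
          field_simp
          ring
  have hlim : Tendsto (fun n : ℕ => C * ((C / ε) ^ n / n.factorial)) atTop (𝓝 0) := by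
    have := (FloorSemiring.tendsto_pow_div_factorial_atTop (K := ℝ) (C / ε)).const_mul C
    simpa using this
  have hle0 : ψ r ≤ 0 := ge_of_tendsto hlim (Eventually.of_forall hbound)
  exact le_antisymm hle0 (hnonneg r hr)
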